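/- arXiv:2507.12199 — 2 statements merged into one kernel-verified Lean document; each statement's English description precedes it below -/
import Mathlib

section
/- For every m ≥ 2, setting n = m² + 1, the quadratic subdivided star QSST_n satisfies MT(QSST_n, K_n) ≤ (m − 1)m²; in particular MT(QSST_n, K_n) ∈ O(n^{3/2}). -/
/-- A permutation of the nodes is a *swap layer* of `H` if it is an involution that moves
each node only to an adjacent node; such permutations are exactly the products of the
transpositions swapping the two endpoints of each edge of a matching of `H`. -/
def IsSwapLayer {V : Type*} (H : SimpleGraph V) (π : Equiv.Perm V) : Prop :=
  π * π = 1 ∧ ∀ v, π v = v ∨ H.Adj v (π v)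

/-- A solution to the Token Meeting Problem instance `(H, A)`: an initial bijection
from tokens to nodes together with a sequence of swap layers (matchings encoded as
involutive permutations), such that every connection of `A` is placed on an edge of `H`
at some intermediate time. The bijection after `t` layers is the composition of the
first `t` layer permutations (in order) with the initial bijection. -/
structure TMPSolution {V Q : Type*} (H : SimpleGraph V) (A : SimpleGraph Q) where
  init : Q ≃ V
  layers : List (Equiv.Perm V)
  isSwapLayer : ∀ π ∈ layers, IsSwapLayer H π
  meets : ∀ p q : Q, A.Adj p q → ∃ t ≤ layers.length,
    H.Adj (((layers.take t).reverse.prod) (init p)) (((layers.take t).reverse.prod) (init q))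

namespace TMPSolution

variable {V Q : Type*} {H : SimpleGraph V} {A : SimpleGraph Q}

/-- The bijection from tokens to nodes after the first `t` swap layers, i.e. `f_{t+1}`. -/
def bijAt (s : TMPSolution H A) (t : ℕ) : Q ≃ V :=
  s.init.trans ((s.layers.take t).reverse.prod : Equiv.Perm V)

/-- The number of steps of a solution. -/
def steps (s : TMPSolution H A) : ℕ := s.layers.length

/-- The number of swaps of a solution: each swap layer contributes the number of
transpositions it is composed of, i.e. half the size of its support. -/
noncomputable def swaps [Fintype V] [DecidableEq V] (s : TMPSolution H A) : ℕ :=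
  (s.layers.map fun π => π.support.card / 2).sum

end TMPSolution

/-- `MS H A`: the minimum number of swaps of any solution (`⊤` if none exists). -/
noncomputable def MS {V Q : Type*} [Fintype V] [DecidableEq V] (H : SimpleGraph V)
    (A : SimpleGraph Q) : ℕ∞ :=
  sInf {n : ℕ∞ | ∃ s : TMPSolution H A, n = (s.swaps : ℕ∞)}

/-- `MT H A`: the minimum number of steps of any solution (`⊤` if none exists). -/
noncomputable def MT {V Q : Type*} (H : SimpleGraph V) (A : SimpleGraph Q) : ℕ∞ :=
  sInf {n : ℕ∞ | ∃ s : TMPSolution H A, n = (s.steps : ℕ∞)}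

/-- `MSt H A t`: the minimum number of swaps of any solution with exactly `t` steps
(`⊤` if none exists). -/
noncomputable def MSt {V Q : Type*} [Fintype V] [DecidableEq V] (H : SimpleGraph V)
    (A : SimpleGraph Q) (t : ℕ) : ℕ∞ :=
  sInf {n : ℕ∞ | ∃ s : TMPSolution H A, s.steps = t ∧ n = (s.swaps : ℕ∞)}


/-- The quadratic subdivided star `QSST_{m²+1}`: a root node (`none`) together with
`m` vertex-disjoint paths of `m` vertices each; the vertex `(i, j)` is the `j`-th vertex
of the `i`-th path, with `(i, 0)` adjacent to the root. -/
def QSST (m : ℕ) : SimpleGraph (Option (Fin m × Fin m)) :=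
  SimpleGraph.fromRel fun u v =>
    (u = none ∧ ∃ i : Fin m, v = some (i, ⟨0, i.pos⟩)) ∨
    (∃ (i : Fin m) (j : ℕ) (h : j + 1 < m),
      u = some (i, ⟨j, Nat.lt_of_succ_lt h⟩) ∧ v = some (i, ⟨j + 1, h⟩))

namespace TMPQSST

/-! ### Arithmetic core: billiard trajectories for the odd-even brick dynamics -/

/-- Lift of initial position `i` to the "unfolded circle" of circumference `4m+2`. -/
def tc (m i : ℕ) : ℕ := if i % 2 = m % 2 then i else 4 * m + 1 - i

/-- Folding map from the unfolded circle (truncated domain `x ≤ 6m+2`) back to `[0, 2m]`. -/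
def hh (m x : ℕ) : ℕ :=
  if x ≤ 2 * m then x else if x ≤ 4 * m + 1 then 4 * m + 1 - x else x - (4 * m + 2)

/-- Position at time `t` of the token starting at path position `i`. -/
def traj (m i t : ℕ) : ℕ := hh m (tc m i + t)

/-- Partner of path position `k` in the matching of layer `t` (layers are `1`-indexed):
the matching consists of the path edges `(j, j+1)` with `j ≡ m + t + 1 [MOD 2]`. -/
def ptn (m t k : ℕ) : ℕ :=
  if k < 2 * m ∧ k % 2 = (m + t + 1) % 2 then k + 1
  else if 1 ≤ k ∧ (k - 1) % 2 = (m + t + 1) % 2 then k - 1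
  else k

lemma tc_le {m i : ℕ} (hi : i ≤ 2 * m) : tc m i ≤ 4 * m + 1 := by
  unfold tc; split <;> omega

lemma tc_parity {m i : ℕ} (hi : i ≤ 2 * m) : tc m i % 2 = m % 2 := by
  unfold tc; split <;> omega

lemma tc_inj {m i j : ℕ} (hi : i ≤ 2 * m) (hj : j ≤ 2 * m) (hij : i ≠ j) :
    tc m i ≠ tc m j := by
  unfold tc; split <;> split <;> omega

lemma traj_zero {m i : ℕ} (hi : i ≤ 2 * m) : traj m i 0 = i := by
  unfold traj hh tc; split_ifs <;> omega

lemma traj_le {m i t : ℕ} (hi : i ≤ 2 * m) (ht : t ≤ 2 * m) : traj m i t ≤ 2 * m := by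
  have h1 := tc_le (m := m) hi
  unfold traj hh; split_ifs <;> omega

lemma ptn_le {m t k : ℕ} (hk : k ≤ 2 * m) : ptn m t k ≤ 2 * m := by
  unfold ptn; split_ifs <;> omega

lemma ptn_invol {m t k : ℕ} (hk : k ≤ 2 * m) : ptn m t (ptn m t k) = k := by
  unfold ptn; split_ifs <;> omega

lemma ptn_cases {m t k : ℕ} : ptn m t k = k + 1 ∨ ptn m t k + 1 = k ∨ ptn m t k = k := by
  unfold ptn; split_ifs <;> omega

lemma hh_step {m c t : ℕ} (h1 : c ≤ 4 * m + 1) (h2 : c % 2 = m % 2) (ht : t + 1 ≤ 2 * m) :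
    ptn m (t + 1) (hh m (c + t)) = hh m (c + t + 1) := by
  unfold hh ptn; split_ifs <;> omega

/-- The key stepping identity: applying layer `t+1`'s matching to the time-`t`
position of token `i` yields its time-`t+1` position. -/
lemma ptn_traj {m i t : ℕ} (hi : i ≤ 2 * m) (ht : t + 1 ≤ 2 * m) :
    ptn m (t + 1) (traj m i t) = traj m i (t + 1) := by
  have := hh_step (tc_le (m := m) hi) (tc_parity (m := m) hi) ht
  simpa [traj, Nat.add_assoc] using this

lemma hh_meet {m a b : ℕ} (h1 : a ≤ 4 * m + 1) (h2 : a % 2 = m % 2)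
    (h3 : b ≤ 4 * m + 1) (h4 : b % 2 = m % 2) (h5 : a ≠ b) :
    ∃ t ≤ 2 * m, hh m (a + t) = hh m (b + t) + 1 ∨ hh m (b + t) = hh m (a + t) + 1 := by
  set s := (a + b) / 2 with hs
  refine ⟨if s = 0 then 0 else if s ≤ 2 * m then 2 * m + 1 - s
      else if s = 2 * m + 1 then 0 else 4 * m + 2 - s, ?_, ?_⟩
  · split_ifs <;> omega
  · unfold hh; split_ifs <;> omega

/-- The meeting lemma: any two distinct tokens on the path are adjacent at some
time `t ≤ 2m`. -/
lemma traj_meet {m i j : ℕ} (hi : i ≤ 2 * m) (hj : j ≤ 2 * m) (hij : i ≠ j) :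
    ∃ t ≤ 2 * m, traj m i t = traj m j t + 1 ∨ traj m j t = traj m i t + 1 := by
  exact hh_meet (tc_le hi) (tc_parity hi) (tc_le hj) (tc_parity hj) (tc_inj hi hj hij)

/-- Where tokens end up after `2m` layers: tokens from the right arm cover the
left arm, the others cover root plus right arm. -/
lemma traj_final_left {m i : ℕ} (hi : m + 1 ≤ i) (hi2 : i ≤ 2 * m) :
    traj m i (2 * m) < m := by
  unfold traj hh tc; split_ifs <;> omega

lemma traj_final_right {m i : ℕ} (hi : i ≤ m) :
    m ≤ traj m i (2 * m) ∧ traj m i (2 * m) ≤ 2 * m := by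
  unfold traj hh tc; split_ifs <;> omega

/-! ### The op path: arm `a`, root, arm `a+1`, and its layer permutations -/

abbrev VV (m : ℕ) := Option (Fin m × Fin m)

/-- Vertex at position `k ∈ [0, 2m]` of the path consisting of arm `a`
(positions `0..m-1`, leaf first), the root (position `m`) and arm `a+1`
(positions `m+1..2m`). -/
def pathV (m a k : ℕ) : VV m :=
  if h : a + 1 < m ∧ k ≤ 2 * m then
    if h2 : k < m then some (⟨a, by omega⟩, ⟨m - 1 - k, by omega⟩)
    else if h3 : k = m then none
    else some (⟨a + 1, by omega⟩, ⟨k - m - 1, by omega⟩)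
  else none

/-- Position of a vertex on the op path of arm pair `(a, a+1)`, if present. -/
def coordOf (m a : ℕ) (v : VV m) : Option ℕ :=
  match v with
  | none => some m
  | some (i, j) =>
      if i.val = a then some (m - 1 - j.val)
      else if i.val = a + 1 then some (m + 1 + j.val) else none

lemma pathV_lt {m a k : ℕ} (ha : a + 1 < m) (hk : k < m) :
    pathV m a k = some (⟨a, by omega⟩, ⟨m - 1 - k, by omega⟩) := by
  unfold pathV
  rw [dif_pos ⟨ha, by omega⟩, dif_pos hk]

lemma pathV_eq {m a : ℕ} (ha : a + 1 < m) : pathV m a m = none := by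
  unfold pathV
  rw [dif_pos ⟨ha, by omega⟩, dif_neg (by omega), dif_pos rfl]

lemma pathV_gt {m a k : ℕ} (ha : a + 1 < m) (hk : m < k) (hk2 : k ≤ 2 * m) :
    pathV m a k = some (⟨a + 1, by omega⟩, ⟨k - m - 1, by omega⟩) := by
  unfold pathV
  rw [dif_pos ⟨ha, hk2⟩, dif_neg (by omega), dif_neg (by omega)]

lemma coordOf_le {m a k : ℕ} {v : VV m} (h : coordOf m a v = some k) : k ≤ 2 * m := by
  match v with
  | none => simp [coordOf] at h; omega
  | some (i, j) =>
    have hj := j.isLt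
    simp only [coordOf] at h
    split_ifs at h <;> simp_all <;> omega

lemma coordOf_pathV {m a k : ℕ} (ha : a + 1 < m) (hk : k ≤ 2 * m) :
    coordOf m a (pathV m a k) = some k := by
  rcases Nat.lt_trichotomy k m with h | h | h
  · rw [pathV_lt ha h]; simp [coordOf]; omega
  · subst h; rw [pathV_eq ha]; simp [coordOf]
  · rw [pathV_gt ha h hk]; simp [coordOf]; omega

lemma pathV_coordOf {m a k : ℕ} {v : VV m} (ha : a + 1 < m)
    (h : coordOf m a v = some k) : pathV m a k = v := by
  match v with
  | none =>
    simp only [coordOf, Option.some.injEq] at h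
    subst h; exact pathV_eq ha
  | some (i, j) =>
    have hj := j.isLt
    simp only [coordOf] at h
    split_ifs at h with h1 h2
    · simp only [Option.some.injEq] at h
      rw [← h, pathV_lt ha (by omega)]
      simp only [Option.some.injEq, Prod.mk.injEq]
      exact ⟨Fin.ext h1.symm, Fin.ext (by simp; omega)⟩
    · simp only [Option.some.injEq] at h
      rw [← h, pathV_gt ha (by omega) (by omega)]
      simp only [Option.some.injEq, Prod.mk.injEq]
      exact ⟨Fin.ext h2.symm, Fin.ext (by simp; omega)⟩

lemma coordOf_inj {m a k : ℕ} {v w : VV m} (ha : a + 1 < m)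
    (hv : coordOf m a v = some k) (hw : coordOf m a w = some k) : v = w := by
  rw [← pathV_coordOf ha hv, ← pathV_coordOf ha hw]

/-- Positions `k` and `k+1` on the op path are adjacent in the tree. -/
lemma adj_pathV {m a k : ℕ} (ha : a + 1 < m) (hk : k + 1 ≤ 2 * m) :
    (QSST m).Adj (pathV m a k) (pathV m a (k + 1)) := by
  have hm : 0 < m := by omega
  rw [QSST, SimpleGraph.fromRel_adj]
  rcases Nat.lt_trichotomy (k + 1) m with h | h | h
  · -- both in arm a
    rw [pathV_lt ha (by omega), pathV_lt ha h]
    constructor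
    · simp only [ne_eq, Option.some.injEq, Prod.mk.injEq, Fin.mk.injEq]; omega
    refine Or.inr (Or.inr ⟨⟨a, by omega⟩, m - 1 - (k + 1), by omega, rfl, ?_⟩)
    simp only [Option.some.injEq, Prod.mk.injEq, Fin.mk.injEq]
    exact ⟨trivial, by omega⟩
  · -- k+1 = m : arm a leaf-side end touches root
    have hv : pathV m a (k + 1) = none := by rw [h]; exact pathV_eq ha
    rw [pathV_lt ha (by omega), hv]
    constructor
    · simp
    refine Or.inr (Or.inl ⟨rfl, ⟨a, by omega⟩, ?_⟩)
    simp only [Option.some.injEq, Prod.mk.injEq, Fin.mk.injEq]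
    exact ⟨trivial, by omega⟩
  · rcases Nat.lt_trichotomy k m with h2 | h2 | h2
    · omega
    · -- k = m : root touches arm a+1
      have hu : pathV m a k = none := by rw [h2]; exact pathV_eq ha
      rw [hu, pathV_gt ha (by omega) hk]
      constructor
      · simp
      refine Or.inl (Or.inl ⟨rfl, ⟨a + 1, ha⟩, ?_⟩)
      simp only [Option.some.injEq, Prod.mk.injEq, Fin.mk.injEq]
      exact ⟨trivial, by omega⟩
    · -- both in arm a+1
      rw [pathV_gt ha h2 (by omega), pathV_gt ha (by omega) hk]
      constructor
      · simp only [ne_eq, Option.some.injEq, Prod.mk.injEq, Fin.mk.injEq]; omega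
      refine Or.inl (Or.inr ⟨⟨a + 1, ha⟩, k - m - 1, by omega, rfl, ?_⟩)
      simp only [Option.some.injEq, Prod.mk.injEq, Fin.mk.injEq]
      exact ⟨trivial, by omega⟩

/-- The underlying function of the layer-`t` permutation of the op on arms `(a, a+1)`. -/
def layerF (m a t : ℕ) (v : VV m) : VV m :=
  match coordOf m a v with
  | none => v
  | some k => pathV m a (ptn m t k)

lemma layerF_eq {m a t k : ℕ} {v : VV m} (hc : coordOf m a v = some k) :
    layerF m a t v = pathV m a (ptn m t k) := by
  unfold layerF; rw [hc]

lemma layerF_fix {m a t : ℕ} {v : VV m} (h : coordOf m a v = none) :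
    layerF m a t v = v := by unfold layerF; rw [h]

lemma layerF_invol {m a t : ℕ} (ha : a + 1 < m) : Function.Involutive (layerF m a t) := by
  intro v
  cases hc : coordOf m a v with
  | none => rw [layerF_fix hc, layerF_fix hc]
  | some k =>
    have hk : k ≤ 2 * m := coordOf_le hc
    rw [layerF_eq hc, layerF_eq (coordOf_pathV ha (ptn_le hk)), ptn_invol hk]
    exact pathV_coordOf ha hc

/-- The layer-`t` permutation of the op on arms `(a, a+1)` (identity for invalid `a`). -/
def layerPerm (m a t : ℕ) : Equiv.Perm (VV m) :=
  if ha : a + 1 < m then Function.Involutive.toPerm _ (layerF_invol (t := t) ha) else 1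

lemma layerPerm_apply {m a t : ℕ} (ha : a + 1 < m) (v : VV m) :
    layerPerm m a t v = layerF m a t v := by
  unfold layerPerm; rw [dif_pos ha]; rfl

lemma isSwapLayer_layerPerm {m a t : ℕ} : IsSwapLayer (QSST m) (layerPerm m a t) := by
  by_cases ha : a + 1 < m
  · constructor
    · refine Equiv.ext fun v => ?_
      rw [Equiv.Perm.mul_apply, Equiv.Perm.one_apply, layerPerm_apply ha,
        layerPerm_apply ha]
      exact layerF_invol ha v
    · intro v
      rw [layerPerm_apply ha]
      cases hc : coordOf m a v with
      | none => left; exact layerF_fix hc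
      | some k =>
        have hk : k ≤ 2 * m := coordOf_le hc
        have hv : pathV m a k = v := pathV_coordOf ha hc
        rw [layerF_eq hc]
        rcases ptn_cases (m := m) (t := t) (k := k) with hp | hp | hp
        · right
          rw [hp, ← hv]
          exact adj_pathV (k := k) ha (by have := ptn_le (m := m) (t := t) hk; omega)
        · right
          rw [← hv]
          have h2 := adj_pathV (k := ptn m t k) ha (by omega)
          rw [hp] at h2
          exact h2.symm
        · left; rw [hp, hv]
  · unfold layerPerm
    rw [dif_neg ha]
    exact ⟨by simp, fun v => Or.inl rfl⟩
/-! ### The 2m layers of one op and their prefix products -/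

/-- The `2m` swap layers of the op on arms `(a, a+1)`. -/
def opL (m a : ℕ) : List (Equiv.Perm (VV m)) :=
  (List.range (2 * m)).map fun s => layerPerm m a (s + 1)

lemma opL_length {m a : ℕ} : (opL m a).length = 2 * m := by
  simp [opL]

lemma opL_take_succ {m a t : ℕ} (ht : t < 2 * m) :
    (opL m a).take (t + 1) = (opL m a).take t ++ [layerPerm m a (t + 1)] := by
  rw [List.take_succ]
  congr 1
  have : (opL m a)[t]? = some (layerPerm m a (t + 1)) := by
    rw [opL, List.getElem?_map, List.getElem?_range ht]; rfl
  rw [this]; rfl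

lemma opL_pos {m a : ℕ} (ha : a + 1 < m) :
    ∀ t ≤ 2 * m, ∀ i ≤ 2 * m,
      ((opL m a).take t).reverse.prod (pathV m a i) = pathV m a (traj m i t) := by
  intro t
  induction t with
  | zero =>
    intro _ i hi
    simp [traj_zero hi]
  | succ t ih =>
    intro ht i hi
    rw [opL_take_succ (by omega), List.reverse_append, List.reverse_singleton,
      List.singleton_append, List.prod_cons, Equiv.Perm.mul_apply,
      ih (by omega) i hi, layerPerm_apply ha,
      layerF_eq (coordOf_pathV ha (traj_le hi (by omega))), ptn_traj hi ht]

lemma prod_fix {m : ℕ} (L : List (Equiv.Perm (VV m))) (v : VV m)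
    (h : ∀ π ∈ L, π v = v) : L.reverse.prod v = v := by
  induction L with
  | nil => rfl
  | cons π L ih =>
    rw [List.reverse_cons, List.prod_append, List.prod_singleton,
      Equiv.Perm.mul_apply, h π List.mem_cons_self, ih fun π' hπ' => h π' (List.mem_cons_of_mem _ hπ')]

lemma opL_fix {m a t : ℕ} {v : VV m} (hc : coordOf m a v = none) :
    ((opL m a).take t).reverse.prod v = v := by
  refine prod_fix _ _ fun π hπ => ?_
  have hπ' : π ∈ opL m a := List.take_subset _ _ hπ
  obtain ⟨s, _, rfl⟩ := List.mem_map.mp hπ'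
  by_cases ha : a + 1 < m
  · rw [layerPerm_apply ha, layerF_fix hc]
  · simp [layerPerm, dif_neg ha]

/-- Net permutation effected by one op. -/
def opNet (m a : ℕ) : Equiv.Perm (VV m) := (opL m a).reverse.prod

lemma opNet_pos {m a i : ℕ} (ha : a + 1 < m) (hi : i ≤ 2 * m) :
    opNet m a (pathV m a i) = pathV m a (traj m i (2 * m)) := by
  have h2 := opL_pos ha (2 * m) le_rfl i hi
  rw [← opL_length (m := m) (a := a), List.take_length] at h2
  rw [opNet, h2, opL_length]

lemma opNet_fix {m a : ℕ} {v : VV m} (hc : coordOf m a v = none) : opNet m a v = v := by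
  have h2 := opL_fix (a := a) (t := 2 * m) hc
  rw [← opL_length (m := m) (a := a), List.take_length] at h2
  rw [opNet, h2]

/-- During one op, any two tokens on its path become adjacent at some time `t ≤ 2m`. -/
lemma gadget_meet {m a : ℕ} (ha : a + 1 < m) {w₁ w₂ : VV m} {k₁ k₂ : ℕ}
    (h₁ : coordOf m a w₁ = some k₁) (h₂ : coordOf m a w₂ = some k₂) (hne : k₁ ≠ k₂) :
    ∃ t ≤ 2 * m, (QSST m).Adj (((opL m a).take t).reverse.prod w₁)
      (((opL m a).take t).reverse.prod w₂) := by
  have hk₁ := coordOf_le h₁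
  have hk₂ := coordOf_le h₂
  obtain ⟨t, ht, hcase⟩ := traj_meet hk₁ hk₂ hne
  refine ⟨t, ht, ?_⟩
  rw [← pathV_coordOf ha h₁, ← pathV_coordOf ha h₂, opL_pos ha t ht _ hk₁,
    opL_pos ha t ht _ hk₂]
  have hb₁ := traj_le (m := m) hk₁ ht
  have hb₂ := traj_le (m := m) hk₂ ht
  rcases hcase with h | h
  · have := adj_pathV (k := traj m k₂ t) ha (by omega)
    rw [← h] at this
    exact this.symm
  · have := adj_pathV (k := traj m k₁ t) ha (by omega)
    rwa [← h] at this
/-! ### The invariant: which token groups sit on which arms -/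

/-- The vertex `w` lies on arm `j`. -/
def InArm (m j : ℕ) (w : VV m) : Prop := ∃ (hj : j < m) (l : Fin m), w = some (⟨j, hj⟩, l)

/-- The vertex `w` lies on arm `j` or is the root. -/
def InTrav (m j : ℕ) (w : VV m) : Prop := w = none ∨ InArm m j w

lemma InArm_congr {m j j' : ℕ} {w : VV m} (h : j = j') (hw : InArm m j w) :
    InArm m j' w := h ▸ hw

lemma InTrav_congr {m j j' : ℕ} {w : VV m} (h : j = j') (hw : InTrav m j w) :
    InTrav m j' w := h ▸ hw

lemma coord_right {m a : ℕ} {w : VV m} (h : InArm m (a + 1) w) :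
    ∃ k, coordOf m a w = some k ∧ m + 1 ≤ k ∧ k ≤ 2 * m := by
  obtain ⟨hj, l, rfl⟩ := h
  have hl := l.isLt
  refine ⟨m + 1 + l.val, ?_, by omega, by omega⟩
  simp only [coordOf]
  rw [if_neg (by omega)]; simp

lemma coord_trav {m a : ℕ} {w : VV m} (h : InTrav m a w) :
    ∃ k, coordOf m a w = some k ∧ k ≤ m := by
  rcases h with rfl | ⟨hj, l, rfl⟩
  · exact ⟨m, rfl, le_rfl⟩
  · refine ⟨m - 1 - l.val, ?_, by omega⟩
    simp [coordOf]

lemma coord_none_of_arm {m a j : ℕ} {w : VV m} (h1 : j ≠ a) (h2 : j ≠ a + 1)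
    (h : InArm m j w) : coordOf m a w = none := by
  obtain ⟨hj, l, rfl⟩ := h
  simp only [coordOf]
  rw [if_neg (by omega), if_neg (by omega)]

lemma arm_of_coord_lt {m a k : ℕ} (ha : a + 1 < m) (hk : k < m) :
    InArm m a (pathV m a k) := by
  rw [pathV_lt ha hk]
  exact ⟨by omega, _, rfl⟩

lemma trav_of_coord_ge {m a k : ℕ} (ha : a + 1 < m) (hk : m ≤ k) (hk2 : k ≤ 2 * m) :
    InTrav m (a + 1) (pathV m a k) := by
  rcases Nat.eq_or_lt_of_le hk with h | h
  · left; rw [← h, pathV_eq ha]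
  · right; rw [pathV_gt ha h hk2]; exact ⟨ha, _, rfl⟩

/-- The invariant before op `i` of pass `k`: arms `j < i` hold group `j + k`,
arms `j ≥ i + 1` hold group `j + k - 1`, group `k - 1` (and, in pass 1, the root
token) travel inside arm `i` together with the root. -/
def Inv (m : ℕ) (g : Equiv.Perm (VV m)) (k i : ℕ) : Prop :=
  (∀ (u l : Fin m), k ≤ u.val → u.val < i + k → InArm m (u.val - k) (g (some (u, l)))) ∧
  (∀ (u l : Fin m), i + k ≤ u.val → InArm m (u.val + 1 - k) (g (some (u, l)))) ∧
  (∀ (u l : Fin m), u.val = k - 1 → InTrav m i (g (some (u, l)))) ∧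
  (k = 1 → InTrav m i (g none))

lemma inv_base {m : ℕ} : Inv m 1 1 0 := by
  refine ⟨fun u l h1 h2 => absurd h2 (by omega), fun u l h1 => ?_, fun u l h1 => ?_, fun _ => ?_⟩
  · refine InArm_congr (j := u.val) (by omega) ⟨u.isLt, l, ?_⟩
    simp
  · right
    refine InArm_congr (j := u.val) (by omega) ⟨u.isLt, l, ?_⟩
    simp [Fin.ext_iff, h1]
  · left; rfl

/-- One op of a pass preserves the invariant, advancing the traveling group. -/
lemma inv_step {m k i : ℕ} {g : Equiv.Perm (VV m)} (hk : 1 ≤ k) (hkm : k ≤ m - 1)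
    (hi : i < m - k) (hm : 2 ≤ m) (hg : Inv m g k i) :
    Inv m (opNet m i * g) k (i + 1) := by
  obtain ⟨hS2, hS1, hT, hR⟩ := hg
  have ha : i + 1 < m := by omega
  refine ⟨fun u l h1 h2 => ?_, fun u l h1 => ?_, fun u l h1 => ?_, fun h1 => ?_⟩
  · rw [Equiv.Perm.mul_apply]
    rcases Nat.lt_or_ge u.val (i + k) with h3 | h3
    · -- untouched: arm u - k < i
      have hold := hS2 u l h1 h3
      rw [opNet_fix (coord_none_of_arm (by omega) (by omega) hold)]
      exact hold
    · -- u = i + k : was on arm i+1, moves to arm i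
      have hold := hS1 u l h3
      have hold' : InArm m (i + 1) (g (some (u, l))) := InArm_congr (by omega) hold
      obtain ⟨c, hc, hc1, hc2⟩ := coord_right hold'
      rw [← pathV_coordOf ha hc, opNet_pos ha hc2]
      exact InArm_congr (by omega) (arm_of_coord_lt ha (traj_final_left hc1 hc2))
  · rw [Equiv.Perm.mul_apply]
    have hold := hS1 u l (by omega)
    rw [opNet_fix (coord_none_of_arm (by omega) (by omega) hold)]
    exact hold
  · rw [Equiv.Perm.mul_apply]
    have hold := hT u l h1
    obtain ⟨c, hc, hc1⟩ := coord_trav hold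
    have hc2 : c ≤ 2 * m := coordOf_le hc
    rw [← pathV_coordOf ha hc, opNet_pos ha hc2]
    have := traj_final_right (m := m) (i := c) hc1
    exact trav_of_coord_ge ha this.1 this.2
  · rw [Equiv.Perm.mul_apply]
    have hold := hR h1
    obtain ⟨c, hc, hc1⟩ := coord_trav hold
    have hc2 : c ≤ 2 * m := coordOf_le hc
    rw [← pathV_coordOf ha hc, opNet_pos ha hc2]
    have := traj_final_right (m := m) (i := c) hc1
    exact trav_of_coord_ge ha this.1 this.2

/-- Passing from the end of pass `k` to the start of pass `k+1`. -/
lemma inv_pass {m k : ℕ} {g : Equiv.Perm (VV m)} (hk : 1 ≤ k) (hkm : k + 1 ≤ m - 1)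
    (hg : Inv m g k (m - k)) : Inv m g (k + 1) 0 := by
  obtain ⟨hS2, hS1, hT, hR⟩ := hg
  refine ⟨fun u l h1 h2 => absurd h2 (by omega), fun u l h1 => ?_, fun u l h1 => ?_,
    fun h1 => absurd h1 (by omega)⟩
  · have hu := u.isLt
    exact InArm_congr (by omega) (hS2 u l (by omega) (by omega))
  · have hu := u.isLt
    exact Or.inr (InArm_congr (by omega) (hS2 u l (by omega) (by omega)))
/-! ### The global schedule: bubble passes of ops -/

/-- The schedule: pass `k` (for `k = 1, …, m-1`) performs ops on arm pairs
`(0,1), (1,2), …, (m-k-2, m-k-1)`; an entry `i` denotes the op on arms `(i, i+1)`. -/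
def sched (m : ℕ) : List ℕ := (List.range (m - 1)).flatMap fun k' => List.range (m - 1 - k')

/-- The full sequence of swap layers. -/
def layers (m : ℕ) : List (Equiv.Perm (VV m)) := (sched m).flatMap (opL m)

lemma cfg_append {m : ℕ} (A B : List (Equiv.Perm (VV m))) :
    (A ++ B).reverse.prod = B.reverse.prod * A.reverse.prod := by
  rw [List.reverse_append, List.prod_append]

/-- Processing the ops `i, i+1, …, m-k-1` of pass `k`. -/
lemma inpass {m k : ℕ} (hk : 1 ≤ k) (hkm : k ≤ m - 1) (hm : 2 ≤ m) :
    ∀ (c i : ℕ), i + c = m - k → ∀ (g : Equiv.Perm (VV m)), Inv m g k i →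
      (∀ j < c, ∃ C D, (List.range' i c).flatMap (opL m) = C ++ (opL m (i + j) ++ D) ∧
          Inv m (C.reverse.prod * g) k (i + j)) ∧
      Inv m ((((List.range' i c).flatMap (opL m)).reverse.prod) * g) k (m - k) := by
  intro c
  induction c with
  | zero =>
    intro i hic g hg
    refine ⟨fun j hj => absurd hj (by omega), ?_⟩
    have : i = m - k := by omega
    subst this
    simpa using hg
  | succ c ih =>
    intro i hic g hg
    have hstep : Inv m (opNet m i * g) k (i + 1) := inv_step hk hkm (by omega) hm hg
    have hrec := ih (i + 1) (by omega) _ hstep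
    have hsplit : (List.range' i (c + 1)).flatMap (opL m)
        = opL m i ++ (List.range' (i + 1) c).flatMap (opL m) := by
      rw [List.range'_succ, List.flatMap_cons]
    constructor
    · intro j hj
      rcases Nat.eq_zero_or_pos j with rfl | hj0
      · refine ⟨[], (List.range' (i + 1) c).flatMap (opL m), ?_, ?_⟩
        · rw [hsplit]; simp
        · simpa using hg
      · obtain ⟨C', D', hCD, hInv⟩ := hrec.1 (j - 1) (by omega)
        refine ⟨opL m i ++ C', D', ?_, ?_⟩
        · rw [hsplit, hCD, List.append_assoc]
          have : i + 1 + (j - 1) = i + j := by omega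
          rw [this]
        · rw [cfg_append, mul_assoc]
          have : i + 1 + (j - 1) = i + j := by omega
          rw [this] at hInv
          exact hInv
    · rw [hsplit, cfg_append, mul_assoc]
      exact hrec.2

/-- The part of the schedule's layers from pass `k` on. -/
def tails (m k : ℕ) : List (Equiv.Perm (VV m)) :=
  (List.range' (k - 1) (m - k)).flatMap fun k' => (List.range (m - 1 - k')).flatMap (opL m)

lemma layers_eq_tails_one {m : ℕ} : layers m = tails m 1 := by
  rw [layers, sched, tails, List.flatMap_assoc, ← List.range_eq_range' (n := m - 1)]

lemma tails_step {m k : ℕ} (hk : 1 ≤ k) (hkm : k ≤ m - 1) :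
    tails m k = (List.range (m - k)).flatMap (opL m) ++ tails m (k + 1) := by
  rw [tails, tails]
  have h1 : m - k = (m - k - 1) + 1 := by omega
  have h2 : m - (k + 1) = m - k - 1 := by omega
  have h3 : k + 1 - 1 = k := by omega
  have h4 : k - 1 + 1 = k := by omega
  rw [h1, List.range'_succ, List.flatMap_cons, h2, h3, h4]
  have h5 : m - 1 - (k - 1) = m - k := by omega
  rw [h5, ← h1]

/-- At the start of each pass `k`, the invariant holds. -/
lemma pass_inv {m : ℕ} (hm : 2 ≤ m) :
    ∀ k, 1 ≤ k → k ≤ m - 1 →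
      ∃ A, layers m = A ++ tails m k ∧ Inv m (A.reverse.prod) k 0 := by
  intro k
  induction k with
  | zero => omega
  | succ k ih =>
    intro _ hkm
    rcases Nat.eq_zero_or_pos k with rfl | hk0
    · exact ⟨[], layers_eq_tails_one, by simpa using inv_base⟩
    · obtain ⟨A, hA, hInv⟩ := ih hk0 (by omega)
      have hsplit := tails_step hk0 (by omega) (m := m)
      have hrange : List.range (m - k) = List.range' 0 (m - k) := List.range_eq_range'
      have hinp := (inpass hk0 (by omega) hm (m - k) 0 (by omega) _ hInv).2
      refine ⟨A ++ (List.range (m - k)).flatMap (opL m), ?_, ?_⟩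
      · rw [hA, hsplit, List.append_assoc]
      · rw [cfg_append]
        refine inv_pass hk0 (by omega) ?_
        rw [hrange]
        exact hinp
/-- Placement: for each pass `k` and op `i` in it, the layer sequence decomposes
around that op, with the invariant holding at its start. -/
lemma place {m k i : ℕ} (hm : 2 ≤ m) (hk : 1 ≤ k) (hkm : k ≤ m - 1) (hi : i < m - k) :
    ∃ A B, layers m = A ++ (opL m i ++ B) ∧ Inv m (A.reverse.prod) k i := by
  obtain ⟨A0, hA0, hInv⟩ := pass_inv hm k hk hkm
  have hsplit := tails_step hk hkm (m := m)
  have hrange : List.range (m - k) = List.range' 0 (m - k) := List.range_eq_range'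
  obtain ⟨C, D, hCD, hInvC⟩ := (inpass hk hkm hm (m - k) 0 (by omega) _ hInv).1 i hi
  rw [← hrange] at hCD
  refine ⟨A0 ++ C, D ++ tails m (k + 1), ?_, ?_⟩
  · rw [Nat.zero_add] at hCD
    rw [hA0, hsplit, hCD]
    simp [List.append_assoc]
  · rw [Nat.zero_add] at hInvC
    rw [cfg_append]
    exact hInvC
/-! ### Every pair of tokens meets -/

/-- Around a well-chosen op, two tokens that the invariant guarantees to be on the
op's path become adjacent at some global time. -/
lemma meet_at_op {m k i : ℕ} (hm : 2 ≤ m) (hk : 1 ≤ k) (hkm : k ≤ m - 1)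
    (hi : i < m - k) {p q : VV m} (hpq : p ≠ q)
    (hcond : ∀ g : Equiv.Perm (VV m), Inv m g k i →
      (∃ kp, coordOf m i (g p) = some kp) ∧ (∃ kq, coordOf m i (g q) = some kq)) :
    ∃ t ≤ (layers m).length,
      (QSST m).Adj (((layers m).take t).reverse.prod p)
        (((layers m).take t).reverse.prod q) := by
  obtain ⟨A, B, hAB, hInv⟩ := place hm hk hkm hi
  obtain ⟨⟨kp, hkp⟩, ⟨kq, hkq⟩⟩ := hcond _ hInv
  have ha : i + 1 < m := by omega
  have hne : kp ≠ kq := by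
    intro h
    exact hpq (Equiv.injective _ (coordOf_inj ha hkp (h ▸ hkq)))
  obtain ⟨t, ht, hadj⟩ := gadget_meet ha hkp hkq hne
  refine ⟨A.length + t, ?_, ?_⟩
  · rw [hAB]
    simp only [List.length_append, opL_length]
    omega
  · have htake : (layers m).take (A.length + t) = A ++ (opL m i).take t := by
      rw [hAB, List.take_length_add_append, List.take_append_of_le_length (by rw [opL_length]; omega)]
    rw [htake, cfg_append]
    simpa only [Equiv.Perm.mul_apply] using hadj

/-- Extraction for a token of group `u` from the invariant at a suitable op. -/
lemma coord_of_group {m k i : ℕ} {g : Equiv.Perm (VV m)} (hg : Inv m g k i)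
    (u l : Fin m) :
    (u.val = k - 1 → ∃ c, coordOf m i (g (some (u, l))) = some c) ∧
    (u.val = i + k → ∃ c, coordOf m i (g (some (u, l))) = some c) := by
  obtain ⟨hS2, hS1, hT, hR⟩ := hg
  constructor
  · intro hu
    obtain ⟨c, hc, _⟩ := coord_trav (hT u l hu)
    exact ⟨c, hc⟩
  · intro hu
    have h1 : InArm m (i + 1) (g (some (u, l))) :=
      InArm_congr (by omega) (hS1 u l (by omega))
    obtain ⟨c, hc, _⟩ := coord_right h1
    exact ⟨c, hc⟩

/-- Any two distinct tokens become adjacent at some time during the schedule. -/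
lemma meets_all {m : ℕ} (hm : 2 ≤ m) :
    ∀ {p q : VV m}, p ≠ q →
      ∃ t ≤ (layers m).length,
        (QSST m).Adj (((layers m).take t).reverse.prod p)
          (((layers m).take t).reverse.prod q) := by
  -- main asymmetric cases
  have case_root : ∀ (uq : Fin m) (lq : Fin m),
      ∃ t ≤ (layers m).length,
        (QSST m).Adj (((layers m).take t).reverse.prod (none : VV m))
          (((layers m).take t).reverse.prod (some (uq, lq))) := by
    intro uq lq
    have huq := uq.isLt
    rcases Nat.eq_zero_or_pos uq.val with h0 | h0
    · refine meet_at_op (k := 1) (i := 0) hm le_rfl (by omega) (by omega) (by simp)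
        fun g hg => ?_
      refine ⟨?_, ?_⟩
      · obtain ⟨c, hc, _⟩ := coord_trav (hg.2.2.2 rfl)
        exact ⟨c, hc⟩
      · exact (coord_of_group hg uq lq).1 (by omega)
    · refine meet_at_op (k := 1) (i := uq.val - 1) hm le_rfl (by omega) (by omega)
        (by simp) fun g hg => ?_
      refine ⟨?_, ?_⟩
      · obtain ⟨c, hc, _⟩ := coord_trav (hg.2.2.2 rfl)
        exact ⟨c, hc⟩
      · exact (coord_of_group hg uq lq).2 (by omega)
  have case_same : ∀ (u : Fin m) (lp lq : Fin m), lp ≠ lq →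
      ∃ t ≤ (layers m).length,
        (QSST m).Adj (((layers m).take t).reverse.prod (some (u, lp) : VV m))
          (((layers m).take t).reverse.prod (some (u, lq))) := by
    intro u lp lq hl
    have hu := u.isLt
    have hne : (some (u, lp) : VV m) ≠ some (u, lq) := by
      simp only [ne_eq, Option.some.injEq, Prod.mk.injEq]
      exact fun h => absurd h.2 hl
    rcases Nat.eq_zero_or_pos u.val with h0 | h0
    · refine meet_at_op (k := 1) (i := 0) hm le_rfl (by omega) (by omega) hne
        fun g hg => ⟨(coord_of_group hg u lp).1 (by omega), (coord_of_group hg u lq).1 (by omega)⟩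
    · refine meet_at_op (k := 1) (i := u.val - 1) hm le_rfl (by omega) (by omega) hne
        fun g hg => ⟨(coord_of_group hg u lp).2 (by omega), (coord_of_group hg u lq).2 (by omega)⟩
  have case_lt : ∀ (up uq lp lq : Fin m), up.val < uq.val →
      ∃ t ≤ (layers m).length,
        (QSST m).Adj (((layers m).take t).reverse.prod (some (up, lp) : VV m))
          (((layers m).take t).reverse.prod (some (uq, lq))) := by
    intro up uq lp lq hlt
    have hup := up.isLt
    have huq := uq.isLt
    have hne : (some (up, lp) : VV m) ≠ some (uq, lq) := by
      simp only [ne_eq, Option.some.injEq, Prod.mk.injEq]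
      intro h
      exact absurd (congrArg Fin.val h.1) (by omega)
    refine meet_at_op (k := up.val + 1) (i := uq.val - up.val - 1) hm (by omega)
      (by omega) (by omega) hne fun g hg =>
      ⟨(coord_of_group hg up lp).1 (by omega), (coord_of_group hg uq lq).2 (by omega)⟩
  intro p q hpq
  match p, q with
  | none, none => exact absurd rfl hpq
  | none, some (uq, lq) => exact case_root uq lq
  | some (up, lp), none =>
    obtain ⟨t, ht, hadj⟩ := case_root up lp
    exact ⟨t, ht, hadj.symm⟩
  | some (up, lp), some (uq, lq) =>
    rcases Nat.lt_trichotomy up.val uq.val with h | h | h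
    · exact case_lt up uq lp lq h
    · have : up = uq := Fin.ext h
      subst this
      refine case_same up lp lq ?_
      intro hl
      exact hpq (by rw [hl])
    · obtain ⟨t, ht, hadj⟩ := case_lt uq up lq lp h
      exact ⟨t, ht, hadj.symm⟩
/-! ### Counting the layers, and the main theorem -/

lemma flat_range_len : ∀ (n s : ℕ),
    (((List.range' s n).flatMap fun k => List.range (s + n - k)).length) * 2 = n * (n + 1) := by
  intro n
  induction n with
  | zero => intro s; simp
  | succ n ih =>
    intro s
    have hfun : ∀ k ∈ List.range' (s + 1) n,
        List.range (s + (n + 1) - k) = List.range (s + 1 + n - k) := by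
      intro k _
      congr 1
      omega
    rw [List.range'_succ, List.flatMap_cons, List.length_append,
      List.flatMap_congr hfun, Nat.add_mul, ih (s + 1), List.length_range]
    have : s + (n + 1) - s = n + 1 := by omega
    rw [this]
    ring

lemma layers_length {m : ℕ} (hm : 2 ≤ m) : (layers m).length = (m - 1) * m ^ 2 := by
  have h1 : (layers m).length = (sched m).length * (2 * m) := by
    rw [layers, List.length_flatMap]
    have : (sched m).map (fun a => (opL m a).length) = (sched m).map fun _ => 2 * m := by
      refine List.map_congr_left fun a _ => ?_
      simp [Function.comp, opL_length]
    rw [this, List.map_const', List.sum_replicate, smul_eq_mul]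
  have h2 : (sched m).length * 2 = (m - 1) * m := by
    have hfun : ∀ k ∈ List.range' 0 (m - 1),
        List.range (m - 1 - k) = List.range (0 + (m - 1) - k) := by
      intro k _; congr 1; omega
    rw [sched, List.range_eq_range' (n := m - 1), List.flatMap_congr hfun, flat_range_len (m - 1) 0]
    congr 1
    omega
  calc (layers m).length = (sched m).length * (2 * m) := h1
    _ = ((sched m).length * 2) * m := by ring
    _ = ((m - 1) * m) * m := by rw [h2]
    _ = (m - 1) * m ^ 2 := by ring

/-- The solution. -/
def solution (m : ℕ) (hm : 2 ≤ m) :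
    TMPSolution (QSST m) (⊤ : SimpleGraph (VV m)) where
  init := Equiv.refl _
  layers := layers m
  isSwapLayer := by
    intro π hπ
    rw [layers] at hπ
    obtain ⟨a, _, hmem⟩ := List.mem_flatMap.mp hπ
    obtain ⟨s, _, rfl⟩ := List.mem_map.mp hmem
    exact isSwapLayer_layerPerm
  meets := by
    intro p q hpq
    have hne : p ≠ q := by simpa using hpq
    obtain ⟨t, ht, hadj⟩ := meets_all hm hne
    exact ⟨t, ht, hadj⟩

end TMPQSST

/-- For every `m ≥ 2` and `n = m² + 1`, `MT(QSST_n, K_n) ≤ (m-1)·m²`;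
in particular `MT(QSST_n, K_n) ∈ O(n^{3/2})`. -/
theorem MT_QSST_le (m : ℕ) (hm : 2 ≤ m) :
    MT (QSST m) (⊤ : SimpleGraph (Option (Fin m × Fin m))) ≤
      (((m - 1) * m ^ 2 : ℕ) : ℕ∞) := by
  have hmem : (((m - 1) * m ^ 2 : ℕ) : ℕ∞) ∈
      {n : ℕ∞ | ∃ s : TMPSolution (QSST m) (⊤ : SimpleGraph (Option (Fin m × Fin m))),
        n = (s.steps : ℕ∞)} := by
    refine ⟨TMPQSST.solution m hm, ?_⟩
    have : (TMPQSST.solution m hm).steps = (m - 1) * m ^ 2 := TMPQSST.layers_length hm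
    rw [this]
  exact sInf_le hmem
end

section
/- Let k ≥ 2 and let P_k be the path graph with vertices v₁, …, v_k (v₁ and v_k being its two leaves, called the upper and bottom leaf). For every bijection f₁ from a set of k tokens to the vertices of P_k, there exists a sequence of matchings M₁, …, M_{2k−3} of P_k such that, defining f_{t+1} := π_{M_t} ∘ f_t for t = 1, …, 2k−3 (where π_{M_t} is the product of the transpositions swapping the endpoints of the edges of M_t), the following hold: every token is placed on the upper leaf v₁ in at least one of the bijections f₁, …, f_{2k−2}; and the token q with f₁(q) = v₁ satisfies f_{2k−2}(q) = v_k. -/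
namespace PathSeqAux

/-- Swap of `0` and `1`. -/
def swap01 (x : ℕ) : ℕ := if x = 0 then 1 else if x = 1 then 0 else x

/-- The position map of layer `t` for `t < 2k-3` (the alternating matchings part). -/
def layB (k t a : ℕ) : ℕ :=
  if a % 2 ≠ t % 2 ∧ a + 1 ≤ k - 1 ∧ ¬(k ≤ t ∧ a = k - 2) then a + 1
  else if 1 ≤ a ∧ (a - 1) % 2 ≠ t % 2 ∧ ¬(k ≤ t ∧ a = k - 1) then a - 1
  else a

/-- The position map of the `t`-th layer (1-indexed) of our matching sequence on `P_k`. -/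
def lay (k t a : ℕ) : ℕ :=
  if 2 * k - 3 ≤ t then swap01 a else layB k t a

/-- Position of the token starting at vertex `i` after `t` layers, for `t ≤ 2k-4`. -/
def posB (k i t : ℕ) : ℕ :=
  if i = 0 then min t (k - 1)
  else if i % 2 = 1 then
    if t ≤ i then i - t
    else if t ≤ i + 1 then 0
    else if t ≤ i + k - 1 ∧ t ≤ 2 * k - 4 then t - i - 1
    else if t ≤ i + k ∧ t ≤ 2 * k - 4 then k - 2
    else i + 2 * k - 2 - t
  else
    if t ≤ k - 1 - i then i + t
    else if t ≤ k - i then k - 1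
    else if t ≤ 2 * k - 1 - i ∧ t ≤ 2 * k - 4 then 2 * k - 1 - i - t
    else if t ≤ 2 * k - i ∧ t ≤ 2 * k - 4 then 0
    else t + i - 2 * k

/-- Position of the token starting at vertex `i` after `t` layers. -/
def posN (k i t : ℕ) : ℕ :=
  if 2 * k - 3 ≤ t then swap01 (posB k i (2 * k - 4)) else posB k i t

theorem swap01_lt {k x : ℕ} (hk : 2 ≤ k) (hx : x < k) : swap01 x < k := by
  unfold swap01; split_ifs <;> first | contradiction | omega

theorem swap01_invol (x : ℕ) : swap01 (swap01 x) = x := by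
  by_cases h0 : x = 0
  · subst h0; rfl
  · by_cases h1 : x = 1
    · subst h1; rfl
    · have hx : swap01 x = x := by rw [swap01, if_neg h0, if_neg h1]
      rw [hx, hx]

theorem layB_lt {k a : ℕ} (hk : 2 ≤ k) (t : ℕ) (ha : a < k) : layB k t a < k := by
  unfold layB; split_ifs <;> first | contradiction | omega

theorem layB_invol {k a : ℕ} (hk : 2 ≤ k) (t : ℕ) (ha : a < k) :
    layB k t (layB k t a) = a := by
  unfold layB; split_ifs <;> first | contradiction | omega

theorem lay_lt {k a : ℕ} (hk : 2 ≤ k) (t : ℕ) (ha : a < k) : lay k t a < k := by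
  unfold lay; split_ifs with h
  · exact swap01_lt hk ha
  · exact layB_lt hk t ha

theorem lay_invol {k a : ℕ} (hk : 2 ≤ k) (t : ℕ) (ha : a < k) :
    lay k t (lay k t a) = a := by
  unfold lay; split_ifs with h
  · exact swap01_invol a
  · exact layB_invol hk t ha

theorem lay_adj {k a : ℕ} (t : ℕ) :
    lay k t a = a ∨ a + 1 = lay k t a ∨ lay k t a + 1 = a := by
  unfold lay layB swap01; split_ifs <;> first | contradiction | omega

theorem posB_lt {k i t : ℕ} (hk : 2 ≤ k) (hi : i < k) (ht : t < 2 * k - 3) :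
    posB k i t < k := by
  unfold posB; split_ifs <;> first | contradiction | omega

theorem posN_lt {k i : ℕ} (hk : 2 ≤ k) (hi : i < k) (t : ℕ) : posN k i t < k := by
  unfold posN; split_ifs with h
  · exact swap01_lt hk (posB_lt hk hi (by omega))
  · exact posB_lt hk hi (by omega)

theorem posN_zero {k i : ℕ} (hk : 2 ≤ k) (hi : i < k) : posN k i 0 = i := by
  rw [posN, if_neg (by omega)]
  unfold posB; split_ifs <;> first | contradiction | omega

theorem layB_up {k t a : ℕ} (h : a % 2 ≠ t % 2 ∧ a + 1 ≤ k - 1 ∧ ¬(k ≤ t ∧ a = k - 2)) :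
    layB k t a = a + 1 := if_pos h

theorem layB_down {k t a : ℕ} (h1 : ¬(a % 2 ≠ t % 2 ∧ a + 1 ≤ k - 1 ∧ ¬(k ≤ t ∧ a = k - 2)))
    (h2 : 1 ≤ a ∧ (a - 1) % 2 ≠ t % 2 ∧ ¬(k ≤ t ∧ a = k - 1)) :
    layB k t a = a - 1 := by rw [layB, if_neg h1, if_pos h2]

theorem layB_stay {k t a : ℕ} (h1 : ¬(a % 2 ≠ t % 2 ∧ a + 1 ≤ k - 1 ∧ ¬(k ≤ t ∧ a = k - 2)))
    (h2 : ¬(1 ≤ a ∧ (a - 1) % 2 ≠ t % 2 ∧ ¬(k ≤ t ∧ a = k - 1))) :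
    layB k t a = a := by rw [layB, if_neg h1, if_neg h2]

theorem stepZero {k t : ℕ} (hk : 2 ≤ k) (ht : t + 1 < 2 * k - 3) :
    layB k (t + 1) (posB k 0 t) = posB k 0 (t + 1) := by
  have hz : ∀ s, posB k 0 s = min s (k - 1) := fun s => by rw [posB, if_pos rfl]
  rw [hz, hz]
  by_cases hm : t ≤ k - 2
  · have m1 : min t (k - 1) = t := by omega
    have m2 : min (t + 1) (k - 1) = t + 1 := by omega
    rw [m1, m2, layB_up (by omega)]
  · have m1 : min t (k - 1) = k - 1 := by omega
    have m2 : min (t + 1) (k - 1) = k - 1 := by omega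
    rw [m1, m2, layB_stay (by omega) (by omega)]

set_option maxHeartbeats 1000000 in
theorem stepOdd {k i t : ℕ} (hk : 2 ≤ k) (hi : i < k) (ht : t + 1 < 2 * k - 3)
    (hi0 : ¬ i = 0) (hpar : i % 2 = 1) :
    layB k (t + 1) (posB k i t) = posB k i (t + 1) := by
  simp only [posB, if_neg hi0, if_pos hpar]
  split_ifs <;>
    first
      | (rw [layB_up (by omega)]; omega)
      | (rw [layB_down (by omega) (by omega)]; omega)
      | (rw [layB_stay (by omega) (by omega)]; omega)

set_option maxHeartbeats 1000000 in
theorem stepEven {k i t : ℕ} (hk : 2 ≤ k) (hi : i < k) (ht : t + 1 < 2 * k - 3)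
    (hi0 : ¬ i = 0) (hpar : ¬ i % 2 = 1) :
    layB k (t + 1) (posB k i t) = posB k i (t + 1) := by
  simp only [posB, if_neg hi0, if_neg hpar]
  split_ifs <;>
    first
      | (rw [layB_up (by omega)]; omega)
      | (rw [layB_down (by omega) (by omega)]; omega)
      | (rw [layB_stay (by omega) (by omega)]; omega)

theorem posN_step {k i t : ℕ} (hk : 2 ≤ k) (hi : i < k) (ht : t + 1 ≤ 2 * k - 3) :
    lay k (t + 1) (posN k i t) = posN k i (t + 1) := by
  by_cases h : t + 1 = 2 * k - 3
  · have h3 : t = 2 * k - 4 := by omega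
    subst h3
    have h4 : 2 * k - 4 + 1 = 2 * k - 3 := by omega
    have e1 : posN k i (2 * k - 4) = posB k i (2 * k - 4) := if_neg (by omega)
    have e2 : posN k i (2 * k - 3) = swap01 (posB k i (2 * k - 4)) := if_pos le_rfl
    have e3 : lay k (2 * k - 3) (posB k i (2 * k - 4))
        = swap01 (posB k i (2 * k - 4)) := if_pos le_rfl
    rw [h4, e1, e2, e3]
  · have ht2 : t + 1 < 2 * k - 3 := by omega
    rw [posN, if_neg (by omega), posN, if_neg (by omega), lay, if_neg (by omega)]
    by_cases hi0 : i = 0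
    · subst hi0; exact stepZero hk ht2
    · by_cases hpar : i % 2 = 1
      · exact stepOdd hk hi ht2 hi0 hpar
      · exact stepEven hk hi ht2 hi0 hpar

variable {k : ℕ}

/-- The `t`-th layer as a permutation of `Fin k`. -/
def layPerm (hk : 2 ≤ k) (t : ℕ) : Equiv.Perm (Fin k) where
  toFun a := ⟨lay k t a, lay_lt hk t a.2⟩
  invFun a := ⟨lay k t a, lay_lt hk t a.2⟩
  left_inv a := Fin.ext (lay_invol hk t a.2)
  right_inv a := Fin.ext (lay_invol hk t a.2)

/-- The sequence of matchings. -/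
def Lk (hk : 2 ≤ k) : List (Equiv.Perm (Fin k)) :=
  (List.range (2 * k - 3)).map (fun t => layPerm hk (t + 1))

theorem Lk_length (hk : 2 ≤ k) : (Lk hk).length = 2 * k - 3 := by
  simp [Lk]

theorem prod_take (hk : 2 ≤ k) (i : Fin k) :
    ∀ t, t ≤ 2 * k - 3 →
      ((((Lk hk).take t).reverse.prod : Equiv.Perm (Fin k)) i : ℕ) = posN k i t := by
  intro t
  induction t with
  | zero =>
    intro _
    simp [posN_zero hk i.2]
  | succ t ih =>
    intro ht
    have ht' : t < (Lk hk).length := by rw [Lk_length]; omega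
    have hget : (Lk hk)[t] = layPerm hk (t + 1) := by
      simp [Lk]
    rw [List.take_succ, List.getElem?_eq_getElem ht', hget]
    simp only [Option.toList_some, List.reverse_append, List.reverse_cons,
      List.reverse_nil, List.nil_append, List.singleton_append, List.prod_cons,
      Equiv.Perm.mul_apply]
    have hih := ih (by omega)
    have : (((Lk hk).take t).reverse.prod : Equiv.Perm (Fin k)) i
        = ⟨posN k i t, posN_lt hk i.2 t⟩ := Fin.ext hih
    rw [this]
    show (lay k (t + 1) (posN k i t) : ℕ) = posN k i (t + 1)
    exact posN_step hk i.2 ht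

end PathSeqAux

/-- The path sequence: for any bijection of `k` tokens onto the path graph `P_k` (`k ≥ 2`),
there is a sequence of `2k - 3` matchings such that every token visits the upper leaf `v₁`
at some time, and the token initially on the upper leaf ends on the bottom leaf `v_k`. -/
theorem path_sequence (k : ℕ) (hk : 2 ≤ k) (T : Type*) (f₁ : T ≃ Fin k) :
    ∃ L : List (Equiv.Perm (Fin k)),
      L.length = 2 * k - 3 ∧
      (∀ π ∈ L, IsSwapLayer (SimpleGraph.pathGraph k) π) ∧
      (∀ q : T, ∃ t ≤ L.length,
        (((L.take t).reverse.prod : Equiv.Perm (Fin k)) (f₁ q) : ℕ) = 0) ∧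
      (∀ q : T, f₁ q = (⟨0, by omega⟩ : Fin k) →
        ((L.reverse.prod : Equiv.Perm (Fin k)) (f₁ q) : ℕ) = k - 1) := by
  classical
  open PathSeqAux in
  refine ⟨Lk hk, Lk_length hk, ?_, ?_, ?_⟩
  · intro π hπ
    simp only [Lk, List.mem_map, List.mem_range] at hπ
    obtain ⟨t, _, rfl⟩ := hπ
    constructor
    · ext a
      rw [Equiv.Perm.mul_apply, Equiv.Perm.one_apply]
      exact lay_invol hk (t+1) a.2
    · intro v
      rcases lay_adj (k := k) (a := (v : ℕ)) (t+1) with h | h | h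
      · left; exact Fin.ext h
      · right
        rw [SimpleGraph.pathGraph_adj]
        left; exact h
      · right
        rw [SimpleGraph.pathGraph_adj]
        right; exact h
  · intro q
    set v : Fin k := f₁ q with hv
    by_cases h0 : (v : ℕ) = 0
    · refine ⟨0, by omega, ?_⟩
      rw [prod_take hk v 0 (by omega), posN_zero hk v.2, h0]
    · by_cases hodd : (v : ℕ) % 2 = 1
      · refine ⟨(v : ℕ), by rw [Lk_length]; have := v.2; omega, ?_⟩
        rw [prod_take hk v (v : ℕ) (by have := v.2; omega)]
        have hvk := v.2
        by_cases h2 : 2 * k - 3 ≤ (v : ℕ)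
        · -- forces k = 2, v = 1
          have hk2 : k = 2 := by omega
          have hv1 : (v : ℕ) = 1 := by omega
          rw [posN, if_pos h2, hv1, hk2]
          rfl
        · rw [posN, if_neg h2]
          unfold posB; split_ifs <;> first | contradiction | omega
      · by_cases h4 : 4 ≤ (v : ℕ)
        · refine ⟨2 * k - 1 - (v : ℕ), by rw [Lk_length]; omega, ?_⟩
          rw [prod_take hk v (2 * k - 1 - (v : ℕ)) (by omega)]
          have hvk := v.2
          rw [posN, if_neg (by omega)]
          unfold posB; split_ifs <;> first | contradiction | omega
        · -- v = 2
          have hv2 : (v : ℕ) = 2 := by omega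
          have hk3 : 3 ≤ k := by omega
          refine ⟨2 * k - 3, by rw [Lk_length], ?_⟩
          rw [prod_take hk v (2 * k - 3) le_rfl, posN, if_pos le_rfl]
          have hb : posB k (v : ℕ) (2 * k - 4) = 1 := by
            rw [hv2]; unfold posB; split_ifs <;> first | contradiction | omega
          rw [hb]
          rfl
  · intro q hq
    have hlen : (Lk hk).take (2 * k - 3) = Lk hk := by
      rw [← Lk_length hk]; exact List.take_length
    rw [← hlen, prod_take hk (f₁ q) (2 * k - 3) le_rfl, hq]
    show posN k 0 (2 * k - 3) = k - 1
    rw [posN, if_pos le_rfl]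
    have hb : posB k 0 (2 * k - 4) = min (2 * k - 4) (k - 1) := by
      rw [posB, if_pos rfl]
    rw [hb]
    unfold swap01; split_ifs <;> first | contradiction | omega
end
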